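/- arXiv:1804.06728 — 2 statements merged into one kernel-verified Lean document; each statement's English description precedes it below -/
import Mathlib

section
/- Let k ≥ 1, let I be an open interval, let y : ℝ → ℝ be infinitely differentiable on I, let x_k ∈ I, and let p_{n,i} : ℝ → ℝ (n ≥ k, 1 ≤ i ≤ k+1) be functions such that y^{(n)}(x) = ∑_{i=1}^{k} p_{n,i}(x) · y^{(k-i)}(x) + p_{n,k+1}(x) for every n ≥ k and all x ∈ I. Fix x ∈ I and suppose that for each i ∈ {1, …, k+1} the series S_i(x) := ∑_{n=k}^{∞} (-1)^n ((x-x_k)^n/n!) · p_{n,i}(x) converges, and that ∑_{n=1}^{∞} (-1)^n ((x-x_k)^n/n!) · y^{(n)}(x) converges to y(x_k) - y(x). Define Q_i(x) := S_i(x) + (-1)^{k-i} (x-x_k)^{k-i}/(k-i)! for 1 ≤ i ≤ k, and Q_{k+1}(x) := S_{k+1}(x) - y(x_k). Then ∑_{i=1}^{k} Q_i(x) · y^{(k-i)}(x) + Q_{k+1}(x) = 0. -/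
/-!
Write `a n = (-1)^n (x - x_k)^n / n!` and `D n = y^{(n)}(x)`. Since `a 0 D 0 = y(x)`, the hypothesis
on the expansion says that the full series `∑_{n ≥ 0} a n D n` converges to `y(x_k)`. Its tail
from `n = k` on equals, after substituting the relation for `y^{(n)}` and exchanging the finite
sums, `∑_i S_i D (k - i) + S_{k+1}` in the limit, while its head `∑_{n < k} a n D n` is
`∑_{i=1}^k a (k - i) D (k - i)`, which supplies the polynomial parts of the `Q_i`.
-/

open Filter Finset Topology

theorem tendsto_sum_Icc_iff_tendsto_sum_range {G : Type*} [AddCommGroup G] [TopologicalSpace G]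
    [IsTopologicalAddGroup G] (f : ℕ → G) (k : ℕ) (L : G) :
    Tendsto (fun N => ∑ n ∈ Icc k N, f n) atTop (𝓝 L) ↔
      Tendsto (fun N => ∑ n ∈ range N, f n) atTop (𝓝 (L + ∑ n ∈ range k, f n)) := by
  have hsplit : (fun N => ∑ n ∈ Icc k N, f n) =ᶠ[atTop]
      fun N => ∑ n ∈ range (N + 1), f n - ∑ n ∈ range k, f n := by
    filter_upwards [eventually_ge_atTop k] with N hN
    rw [← Finset.Ico_add_one_right_eq_Icc, Finset.sum_Ico_eq_sub _ (by omega)]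
  rw [tendsto_congr' hsplit, ← tendsto_add_atTop_iff_nat 1 (f := fun N => ∑ n ∈ range N, f n),
    ← tendsto_sub_const_iff (∑ n ∈ range k, f n) (c := L + _), add_sub_cancel_right]

theorem Finset.sum_Icc_one_sub_eq_sum_range {M : Type*} [AddCommMonoid M] (g : ℕ → M) (k : ℕ) :
    ∑ i ∈ Icc 1 k, g (k - i) = ∑ n ∈ range k, g n :=
  Finset.sum_bij' (fun i _ => k - i) (fun n _ => k - n)
    (fun i hi => by simp only [mem_Icc, mem_range] at hi ⊢; omega)
    (fun n hn => by simp only [mem_Icc, mem_range] at hn ⊢; omega)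
    (fun i hi => by simp only [mem_Icc] at hi; omega)
    (fun n hn => by simp only [mem_range] at hn; omega)
    (fun _ _ => rfl)

theorem Finset.sum_mul_eq_sum_sum_mul_add {R ι κ : Type*} [CommSemiring R] {t : Finset ι}
    {s : Finset κ} {a D r : ι → R} {q : ι → κ → R} {e : κ → R}
    (hD : ∀ n ∈ t, D n = ∑ i ∈ s, q n i * e i + r n) :
    ∑ n ∈ t, a n * D n = ∑ i ∈ s, (∑ n ∈ t, a n * q n i) * e i + ∑ n ∈ t, a n * r n := by
  simp_rw [Finset.sum_mul, mul_assoc]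
  rw [Finset.sum_comm, ← Finset.sum_add_distrib]
  refine Finset.sum_congr rfl fun n hn => ?_
  rw [hD n hn, mul_add, Finset.mul_sum]

theorem reduction_of_order_equation_general (k : ℕ) (c d : ℝ) (y : ℝ → ℝ)
    (xk : ℝ) (p : ℕ → ℕ → ℝ → ℝ)
    (hder : ∀ n, k ≤ n → ∀ x ∈ Set.Ioo c d,
      iteratedDeriv n y x
        = ∑ i ∈ Finset.Icc 1 k, p n i x * iteratedDeriv (k - i) y x + p n (k + 1) x)
    (x : ℝ) (hx : x ∈ Set.Ioo c d) (S : ℕ → ℝ)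
    (hS : ∀ i ∈ Finset.Icc 1 (k + 1),
      Filter.Tendsto
        (fun N : ℕ => ∑ n ∈ Finset.Icc k N,
          (-1 : ℝ) ^ n * ((x - xk) ^ n / (Nat.factorial n : ℝ)) * p n i x)
        Filter.atTop (nhds (S i)))
    (hexp : Filter.Tendsto
      (fun N : ℕ => ∑ n ∈ Finset.Icc 1 N,
        (-1 : ℝ) ^ n * ((x - xk) ^ n / (Nat.factorial n : ℝ)) * iteratedDeriv n y x)
      Filter.atTop (nhds (y xk - y x))) :
    ∑ i ∈ Finset.Icc 1 k,
        (S i + (-1 : ℝ) ^ (k - i) * (x - xk) ^ (k - i) / (Nat.factorial (k - i) : ℝ))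
          * iteratedDeriv (k - i) y x
      + (S (k + 1) - y xk) = 0 := by
  set a : ℕ → ℝ := fun n => (-1 : ℝ) ^ n * ((x - xk) ^ n / (Nat.factorial n : ℝ))
  set D : ℕ → ℝ := fun n => iteratedDeriv n y x
  have htaylor : Tendsto (fun N => ∑ n ∈ range N, a n * D n) atTop (𝓝 (y xk)) := by
    simpa [a, D] using (tendsto_sum_Icc_iff_tendsto_sum_range (fun n => a n * D n) 1 _).1 hexp
  have htail := (tendsto_sum_Icc_iff_tendsto_sum_range (fun n => a n * D n) k
    (y xk - ∑ n ∈ range k, a n * D n)).2 (by simpa using htaylor)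
  have hsubst : Tendsto (fun N => ∑ n ∈ Icc k N, a n * D n) atTop
      (𝓝 (∑ i ∈ Icc 1 k, S i * D (k - i) + S (k + 1))) := by
    have hexpand (N : ℕ) := Finset.sum_mul_eq_sum_sum_mul_add (t := Icc k N) (a := a) (D := D)
      fun n hn => hder n (mem_Icc.1 hn).1 x hx
    refine .congr (fun N => (hexpand N).symm) (.add (tendsto_finsetSum _ fun i hi => ?_) ?_)
    · exact (hS i (mem_Icc.2 ⟨(mem_Icc.1 hi).1, (mem_Icc.1 hi).2.trans k.le_succ⟩)).mul_const _
    · exact hS (k + 1) (by simp)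
  have hlim := tendsto_nhds_unique hsubst htail
  rw [← Finset.sum_Icc_one_sub_eq_sum_range (fun n => a n * D n)] at hlim
  simp only [add_mul, Finset.sum_add_distrib, mul_div_assoc]
  linarith

/-- the reduction-of-order equation. If `y^{(n)} = ∑_{i=1}^k p_{n,i} y^{(k-i)}
+ p_{n,k+1}` on `(c,d)` for all `n ≥ k`, the series `S_i = ∑_{n=k}^∞ (-1)^n ((x-x_k)^n/n!)
p_{n,i}(x)` converge, and `∑_{n=1}^∞ (-1)^n ((x-x_k)^n/n!) y^{(n)}(x) = y(x_k) - y(x)`, then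
`∑_{i=1}^k Q_i(x) y^{(k-i)}(x) + Q_{k+1}(x) = 0`, where
`Q_i = S_i + (-1)^(k-i) (x-x_k)^(k-i)/(k-i)!` for `1 ≤ i ≤ k` and `Q_{k+1} = S_{k+1} - y(x_k)`. -/
theorem reduction_of_order_equation (k : ℕ) (hk : 1 ≤ k) (c d : ℝ) (y : ℝ → ℝ)
    (xk : ℝ) (p : ℕ → ℕ → ℝ → ℝ)
    (hy : ContDiffOn ℝ (⊤ : ℕ∞) y (Set.Ioo c d))
    (hxk : xk ∈ Set.Ioo c d)
    (hder : ∀ n, k ≤ n → ∀ x ∈ Set.Ioo c d,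
      iteratedDeriv n y x
        = ∑ i ∈ Finset.Icc 1 k, p n i x * iteratedDeriv (k - i) y x + p n (k + 1) x)
    (x : ℝ) (hx : x ∈ Set.Ioo c d) (S : ℕ → ℝ)
    (hS : ∀ i ∈ Finset.Icc 1 (k + 1),
      Filter.Tendsto
        (fun N : ℕ => ∑ n ∈ Finset.Icc k N,
          (-1 : ℝ) ^ n * ((x - xk) ^ n / (Nat.factorial n : ℝ)) * p n i x)
        Filter.atTop (nhds (S i)))
    (hexp : Filter.Tendsto
      (fun N : ℕ => ∑ n ∈ Finset.Icc 1 N,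
        (-1 : ℝ) ^ n * ((x - xk) ^ n / (Nat.factorial n : ℝ)) * iteratedDeriv n y x)
      Filter.atTop (nhds (y xk - y x))) :
    ∑ i ∈ Finset.Icc 1 k,
        (S i + (-1 : ℝ) ^ (k - i) * (x - xk) ^ (k - i) / (Nat.factorial (k - i) : ℝ))
          * iteratedDeriv (k - i) y x
      + (S (k + 1) - y xk) = 0 :=
  reduction_of_order_equation_general k c d y xk p hder x hx S hS hexp
end

section
/- Let I be an open interval, let y : ℝ → ℝ be infinitely differentiable on I, let x_1 ∈ I, and let p_{1,1}, p_{1,2} : ℝ → ℝ be infinitely differentiable on I with y'(x) = p_{1,1}(x)·y(x) + p_{1,2}(x) for all x ∈ I. For n ≥ 2 define recursively p_{n,1} := p_{n-1,1}' + p_{n-1,1}·p_{1,1} and p_{n,2} := p_{n-1,2}' + p_{n-1,1}·p_{1,2}. Fix x ∈ I and suppose the series D(x) := ∑_{n=1}^{∞} (-1)^n ((x-x_1)^n/n!) · p_{n,1}(x) + 1 and N(x) := ∑_{n=1}^{∞} (-1)^n ((x-x_1)^n/n!) · p_{n,2}(x) - y(x_1) converge, that ∑_{n=1}^{∞} (-1)^n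 ((x-x_1)^n/n!) · y^{(n)}(x) converges to y(x_1) - y(x), and that D(x) ≠ 0. Then y(x) = -N(x)/D(x). -/
/-!
Differentiating `y⁽ⁿ⁾ = p_{n,1} y + p_{n,2}` and substituting `y' = p_{1,1} y + p_{1,2}` gives the
recursion for the coefficients, so `y⁽ⁿ⁾ = p_{n,1} y + p_{n,2}` for all `n ≥ 1`. The expansion
series at `x` therefore splits into `(D - 1) y(x) + (N + y(x₁))`, and uniqueness of limits gives
`y(x₁) - y(x) = (D - 1) y(x) + N + y(x₁)`, i.e. `D y(x) = -N`.
-/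

open scoped ContDiff

section LinearODE

variable {𝕜 : Type*} [NontriviallyNormedField 𝕜]

theorem deriv_mul_add_of_deriv_eq {p q y a b : 𝕜 → 𝕜} {z : 𝕜}
    (hp : DifferentiableAt 𝕜 p z) (hq : DifferentiableAt 𝕜 q z) (hy : DifferentiableAt 𝕜 y z)
    (hode : deriv y z = a z * y z + b z) :
    deriv (fun w => p w * y w + q w) z
      = (deriv p z + p z * a z) * y z + (deriv q z + p z * b z) := by
  rw [deriv_fun_add (hp.fun_mul hy) hq, deriv_fun_mul hp hy, hode]
  ring

variable {s : Set 𝕜} {p q : ℕ → 𝕜 → 𝕜}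

theorem contDiffOn_linearODE_coeff (hs : IsOpen s)
    (hp : ContDiffOn 𝕜 ∞ (p 1) s) (hq : ContDiffOn 𝕜 ∞ (q 1) s)
    (hrecp : ∀ n, 2 ≤ n → p n = fun x => deriv (p (n - 1)) x + p (n - 1) x * p 1 x)
    (hrecq : ∀ n, 2 ≤ n → q n = fun x => deriv (q (n - 1)) x + p (n - 1) x * q 1 x)
    {n : ℕ} (hn : 1 ≤ n) :
    ContDiffOn 𝕜 ∞ (p n) s ∧ ContDiffOn 𝕜 ∞ (q n) s := by
  induction n, hn using Nat.le_induction with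
  | base => exact ⟨hp, hq⟩
  | succ n hn ih =>
    have hderiv {f : 𝕜 → 𝕜} (hf : ContDiffOn 𝕜 ∞ f s) : ContDiffOn 𝕜 ∞ (deriv f) s :=
      hf.deriv_of_isOpen hs (by simp)
    rw [hrecp (n + 1) (by omega), hrecq (n + 1) (by omega), Nat.add_sub_cancel]
    exact ⟨(hderiv ih.1).add (ih.1.mul hp), (hderiv ih.2).add (ih.1.mul hq)⟩

theorem iteratedDeriv_eq_linearODE_coeff {y : 𝕜 → 𝕜} (hs : IsOpen s)
    (hy : ContDiffOn 𝕜 ∞ y s)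
    (hp : ContDiffOn 𝕜 ∞ (p 1) s) (hq : ContDiffOn 𝕜 ∞ (q 1) s)
    (hode : ∀ z ∈ s, deriv y z = p 1 z * y z + q 1 z)
    (hrecp : ∀ n, 2 ≤ n → p n = fun x => deriv (p (n - 1)) x + p (n - 1) x * p 1 x)
    (hrecq : ∀ n, 2 ≤ n → q n = fun x => deriv (q (n - 1)) x + p (n - 1) x * q 1 x)
    {n : ℕ} (hn : 1 ≤ n) :
    Set.EqOn (iteratedDeriv n y) (fun z => p n z * y z + q n z) s := by
  induction n, hn using Nat.le_induction with
  | base => rw [iteratedDeriv_one]; exact hode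
  | succ n hn ih =>
    intro z hz
    obtain ⟨hpn, hqn⟩ := contDiffOn_linearODE_coeff hs hp hq hrecp hrecq hn
    have hdiff {f : 𝕜 → 𝕜} (hf : ContDiffOn 𝕜 ∞ f s) : DifferentiableAt 𝕜 f z :=
      (hf.differentiableOn (by simp)).differentiableAt (hs.mem_nhds hz)
    rw [iteratedDeriv_succ, (Filter.eventuallyEq_of_mem (hs.mem_nhds hz) ih).deriv_eq,
      deriv_mul_add_of_deriv_eq (hdiff hpn) (hdiff hqn) (hdiff hy) (hode z hz),
      hrecp (n + 1) (by omega), hrecq (n + 1) (by omega), Nat.add_sub_cancel]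

end LinearODE

theorem zeroth_order_solution_formula_general (c d : ℝ) (y : ℝ → ℝ) (x1 : ℝ)
    (p1 p2 : ℕ → ℝ → ℝ)
    (hy : ContDiffOn ℝ (⊤ : ℕ∞) y (Set.Ioo c d))
    (hp1 : ContDiffOn ℝ (⊤ : ℕ∞) (p1 1) (Set.Ioo c d))
    (hp2 : ContDiffOn ℝ (⊤ : ℕ∞) (p2 1) (Set.Ioo c d))
    (hode : ∀ x ∈ Set.Ioo c d, deriv y x = p1 1 x * y x + p2 1 x)
    (hrec1 : ∀ n, 2 ≤ n → p1 n = fun x => deriv (p1 (n - 1)) x + p1 (n - 1) x * p1 1 x)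
    (hrec2 : ∀ n, 2 ≤ n → p2 n = fun x => deriv (p2 (n - 1)) x + p1 (n - 1) x * p2 1 x)
    (x : ℝ) (hx : x ∈ Set.Ioo c d) (D N : ℝ)
    (hD : Filter.Tendsto
      (fun m : ℕ => (∑ n ∈ Finset.Icc 1 m,
        (-1 : ℝ) ^ n * ((x - x1) ^ n / (Nat.factorial n : ℝ)) * p1 n x) + 1)
      Filter.atTop (nhds D))
    (hN : Filter.Tendsto
      (fun m : ℕ => (∑ n ∈ Finset.Icc 1 m,
        (-1 : ℝ) ^ n * ((x - x1) ^ n / (Nat.factorial n : ℝ)) * p2 n x) - y x1)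
      Filter.atTop (nhds N))
    (hexp : Filter.Tendsto
      (fun m : ℕ => ∑ n ∈ Finset.Icc 1 m,
        (-1 : ℝ) ^ n * ((x - x1) ^ n / (Nat.factorial n : ℝ)) * iteratedDeriv n y x)
      Filter.atTop (nhds (y x1 - y x)))
    (hD0 : D ≠ 0) :
    y x = -N / D := by
  set w : ℕ → ℝ := fun n => (-1 : ℝ) ^ n * ((x - x1) ^ n / (Nat.factorial n : ℝ))
  have hsplit (m : ℕ) : ∑ n ∈ Finset.Icc 1 m, w n * iteratedDeriv n y x
      = (∑ n ∈ Finset.Icc 1 m, w n * p1 n x) * y x + ∑ n ∈ Finset.Icc 1 m, w n * p2 n x := by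
    rw [Finset.sum_mul, ← Finset.sum_add_distrib]
    refine Finset.sum_congr rfl fun n hn => ?_
    rw [iteratedDeriv_eq_linearODE_coeff isOpen_Ioo hy hp1 hp2 hode hrec1 hrec2
      (Finset.mem_Icc.mp hn).1 hx]
    ring
  have hlim := ((hD.sub_const 1).mul_const (y x)).add (hN.add_const (y x1))
  simp only [add_sub_cancel_right, sub_add_cancel] at hlim
  have hDy : y x1 - y x = (D - 1) * y x + (N + y x1) :=
    tendsto_nhds_unique (hexp.congr hsplit) hlim
  field_simp
  linear_combination -hDy

/-- the 0-th order solution formula `y = -Q₀₂/Q₀₁`. For a solution of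
`y' = p_{1,1} y + p_{1,2}` on `(c,d)`, with the recursion
`p_{n,1} = p_{n-1,1}' + p_{n-1,1} p_{1,1}` and `p_{n,2} = p_{n-1,2}' + p_{n-1,1} p_{1,2}`,
if `D = ∑_{n=1}^∞ (-1)^n ((x-x₁)^n/n!) p_{n,1}(x) + 1 ≠ 0`,
`N = ∑_{n=1}^∞ (-1)^n ((x-x₁)^n/n!) p_{n,2}(x) - y(x₁)`, and
`∑_{n=1}^∞ (-1)^n ((x-x₁)^n/n!) y^{(n)}(x) = y(x₁) - y(x)`, then `y(x) = -N/D`. -/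
theorem zeroth_order_solution_formula (c d : ℝ) (y : ℝ → ℝ) (x1 : ℝ)
    (p1 p2 : ℕ → ℝ → ℝ)
    (hy : ContDiffOn ℝ (⊤ : ℕ∞) y (Set.Ioo c d))
    (hx1 : x1 ∈ Set.Ioo c d)
    (hp1 : ContDiffOn ℝ (⊤ : ℕ∞) (p1 1) (Set.Ioo c d))
    (hp2 : ContDiffOn ℝ (⊤ : ℕ∞) (p2 1) (Set.Ioo c d))
    (hode : ∀ x ∈ Set.Ioo c d, deriv y x = p1 1 x * y x + p2 1 x)
    (hrec1 : ∀ n, 2 ≤ n → p1 n = fun x => deriv (p1 (n - 1)) x + p1 (n - 1) x * p1 1 x)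
    (hrec2 : ∀ n, 2 ≤ n → p2 n = fun x => deriv (p2 (n - 1)) x + p1 (n - 1) x * p2 1 x)
    (x : ℝ) (hx : x ∈ Set.Ioo c d) (D N : ℝ)
    (hD : Filter.Tendsto
      (fun m : ℕ => (∑ n ∈ Finset.Icc 1 m,
        (-1 : ℝ) ^ n * ((x - x1) ^ n / (Nat.factorial n : ℝ)) * p1 n x) + 1)
      Filter.atTop (nhds D))
    (hN : Filter.Tendsto
      (fun m : ℕ => (∑ n ∈ Finset.Icc 1 m,
        (-1 : ℝ) ^ n * ((x - x1) ^ n / (Nat.factorial n : ℝ)) * p2 n x) - y x1)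
      Filter.atTop (nhds N))
    (hexp : Filter.Tendsto
      (fun m : ℕ => ∑ n ∈ Finset.Icc 1 m,
        (-1 : ℝ) ^ n * ((x - x1) ^ n / (Nat.factorial n : ℝ)) * iteratedDeriv n y x)
      Filter.atTop (nhds (y x1 - y x)))
    (hD0 : D ≠ 0) :
    y x = -N / D :=
  zeroth_order_solution_formula_general c d y x1 p1 p2 hy hp1 hp2 hode hrec1 hrec2 x hx D N hD hN
    hexp hD0
end
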